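/- Let c ∈ ℝ, let U ⊆ ℝ² be open, and let Z : U → ℝ be a smooth function satisfying Z_uu + c·(1 + Z_u² + v²)²·Z_vv = 0 on U. Then the map f : U → ℝ⁵ defined by f(u,v) = (u, −Z_v(u,v), Z(u,v) − v·Z_v(u,v), Z_u(u,v), v) satisfies the contact condition and the K = c condition on U. -/

import Mathlib

noncomputable section

/-- Partial derivative in the direction `(1,0)`. -/
def pu (g : ℝ × ℝ → ℝ) (a : ℝ × ℝ) : ℝ := fderiv ℝ g a (1, 0)

/-- Partial derivative in the direction `(0,1)`. -/
def pv (g : ℝ × ℝ → ℝ) (a : ℝ × ℝ) : ℝ := fderiv ℝ g a (0, 1)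

/-- Jacobian determinant `g_u h_v - g_v h_u`. -/
def Jac (g h : ℝ × ℝ → ℝ) (a : ℝ × ℝ) : ℝ := pu g a * pv h a - pv g a * pu h a

/-- A solution `Z` of the Monge–Ampère equation `Z_uu + c (1 + Z_u² + v²)² Z_vv = 0`
gives rise to a geometric solution `(u, -Z_v, Z - v Z_v, Z_u, v)` to `K = c`. -/
theorem stmt8 (c : ℝ) (U : Set (ℝ × ℝ)) (hU : IsOpen U)
    (Z : ℝ × ℝ → ℝ) (hZ : ContDiffOn ℝ (⊤ : ℕ∞) Z U)
    (hMA : ∀ a ∈ U, pu (pu Z) a + c * (1 + (pu Z a) ^ 2 + a.2 ^ 2) ^ 2 * pv (pv Z) a = 0)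
    (x y z p q : ℝ × ℝ → ℝ)
    (hxdef : ∀ a : ℝ × ℝ, x a = a.1)
    (hydef : ∀ a : ℝ × ℝ, y a = - pv Z a)
    (hzdef : ∀ a : ℝ × ℝ, z a = Z a - a.2 * pv Z a)
    (hpdef : ∀ a : ℝ × ℝ, p a = pu Z a)
    (hqdef : ∀ a : ℝ × ℝ, q a = a.2) :
    (∀ a ∈ U, pu z a = p a * pu x a + q a * pu y a ∧
      pv z a = p a * pv x a + q a * pv y a) ∧
    (∀ a ∈ U, c * (1 + (p a) ^ 2 + (q a) ^ 2) ^ 2 * Jac x y a = Jac p q a) := by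
  have hx : x = fun a => a.1 := funext hxdef
  have hy : y = fun a => - pv Z a := funext hydef
  have hz : z = fun a => Z a - a.2 * pv Z a := funext hzdef
  have hp : p = fun a => pu Z a := funext hpdef
  have hq : q = fun a => a.2 := funext hqdef
  subst hx hy hz hp hq
  have main : ∀ a ∈ U,
      pu (fun a : ℝ × ℝ => a.1) a = 1 ∧ pv (fun a : ℝ × ℝ => a.1) a = 0 ∧
      pu (fun a : ℝ × ℝ => a.2) a = 0 ∧ pv (fun a : ℝ × ℝ => a.2) a = 1 ∧
      pu (fun a => - pv Z a) a = - fderiv ℝ (fderiv ℝ Z) a (1,0) (0,1) ∧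
      pv (fun a => - pv Z a) a = - fderiv ℝ (fderiv ℝ Z) a (0,1) (0,1) ∧
      pu (pu Z) a = fderiv ℝ (fderiv ℝ Z) a (1,0) (1,0) ∧
      pv (pu Z) a = fderiv ℝ (fderiv ℝ Z) a (0,1) (1,0) ∧
      pv (pv Z) a = fderiv ℝ (fderiv ℝ Z) a (0,1) (0,1) ∧
      pu (fun a => Z a - a.2 * pv Z a) a
        = fderiv ℝ Z a (1,0) - a.2 * fderiv ℝ (fderiv ℝ Z) a (1,0) (0,1) ∧
      pv (fun a => Z a - a.2 * pv Z a) a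
        = - (a.2 * fderiv ℝ (fderiv ℝ Z) a (0,1) (0,1)) ∧
      pu Z a = fderiv ℝ Z a (1,0) := by
    intro a ha
    have hZa : ContDiffAt ℝ (⊤ : ℕ∞) Z a := hZ.contDiffAt (hU.mem_nhds ha)
    have hZd : HasFDerivAt Z (fderiv ℝ Z a) a :=
      (hZa.differentiableAt (by simp)).hasFDerivAt
    have hZ2 : HasFDerivAt (fderiv ℝ Z) (fderiv ℝ (fderiv ℝ Z) a) a :=
      ((hZa.fderiv_right (m := (⊤:ℕ∞)) (by exact_mod_cast le_top)).differentiableAt (by simp)).hasFDerivAt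
    set M := fderiv ℝ (fderiv ℝ Z) a with hM
    have hpvZ : HasFDerivAt (pv Z) (M.flip (0,1)) a := by
      have := hZ2.clm_apply (hasFDerivAt_const (((0:ℝ),(1:ℝ)) : ℝ × ℝ) a)
      simp at this; exact this
    have hpuZ : HasFDerivAt (pu Z) (M.flip (1,0)) a := by
      have := hZ2.clm_apply (hasFDerivAt_const (((1:ℝ),(0:ℝ)) : ℝ × ℝ) a)
      simp at this; exact this
    have hfst : pu (fun a : ℝ × ℝ => a.1) a = 1 ∧ pv (fun a : ℝ × ℝ => a.1) a = 0 := by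
      have : fderiv ℝ (fun a : ℝ × ℝ => a.1) a = ContinuousLinearMap.fst ℝ ℝ ℝ :=
        (hasFDerivAt_fst (p := a)).fderiv
      constructor <;> simp [pu, pv, this]
    have hsnd : pu (fun a : ℝ × ℝ => a.2) a = 0 ∧ pv (fun a : ℝ × ℝ => a.2) a = 1 := by
      have : fderiv ℝ (fun a : ℝ × ℝ => a.2) a = ContinuousLinearMap.snd ℝ ℝ ℝ :=
        (hasFDerivAt_snd (p := a)).fderiv
      constructor <;> simp [pu, pv, this]
    have hyD : fderiv ℝ (fun a => - pv Z a) a = -(M.flip (0,1)) := hpvZ.neg.fderiv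
    have hpuZD : fderiv ℝ (pu Z) a = M.flip (1,0) := hpuZ.fderiv
    have hpvZD : fderiv ℝ (pv Z) a = M.flip (0,1) := hpvZ.fderiv
    have hzD : fderiv ℝ (fun a : ℝ × ℝ => Z a - a.2 * pv Z a) a
        = fderiv ℝ Z a - (a.2 • M.flip (0,1) + pv Z a • ContinuousLinearMap.snd ℝ ℝ ℝ) := by
      have h2 : HasFDerivAt (fun a : ℝ × ℝ => a.2) (ContinuousLinearMap.snd ℝ ℝ ℝ) a :=
        hasFDerivAt_snd
      exact (hZd.sub (h2.mul hpvZ)).fderiv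
    refine ⟨hfst.1, hfst.2, hsnd.1, hsnd.2, ?_, ?_, ?_, ?_, ?_, ?_, ?_, rfl⟩
    · simp [pu, hyD, ContinuousLinearMap.flip_apply]
    · have h : pv (fun a => - pv Z a) a = (fderiv ℝ (fun a : ℝ × ℝ => - pv Z a) a) (0,1) := rfl
      rw [h, hyD]; simp
    · simp [pu, hpuZD, ContinuousLinearMap.flip_apply]
    · simp [pv, hpuZD, ContinuousLinearMap.flip_apply]
    · have h : pv (pv Z) a = (fderiv ℝ (pv Z) a) (0,1) := rfl
      rw [h, hpvZD]; simp
    · simp [pu, hzD, ContinuousLinearMap.flip_apply]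
    · have h : pv (fun a : ℝ × ℝ => Z a - a.2 * pv Z a) a
          = (fderiv ℝ (fun a : ℝ × ℝ => Z a - a.2 * pv Z a) a) (0,1) := rfl
      rw [h, hzD]
      simp [ContinuousLinearMap.flip_apply, pv, smul_eq_mul]
  constructor
  · intro a ha
    obtain ⟨h1, h2, h3, h4, h5, h6, h7, h8, h9, h10, h11, h12⟩ := main a ha
    constructor
    · simp only [h10, h1, h5, h12]; ring
    · simp only [h11, h2, h6, h12]; ring
  · intro a ha
    obtain ⟨h1, h2, h3, h4, h5, h6, h7, h8, h9, h10, h11, h12⟩ := main a ha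
    have hma := hMA a ha
    simp only [Jac, h1, h2, h3, h4, h5, h6, h7, h8, h12]
    rw [h12, h7, h9] at hma
    nlinarith [hma]
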